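/- Exact recovery from a dual certificate: under the hypotheses of the dual certificate lemma (existence of z⁽ˣ⁾, z⁽ᵉ⁾ with the stated sign and ℓ^∞ conditions) and the additional hypothesis ‖A_{JᶜT}‖ < 1, the pair (x⋆, e⋆) is the unique minimizer of ‖x‖₁ + λ‖e‖₁ subject to A_{Ω•} x + e = A_{Ω•} x⋆ + e⋆. -/

import Mathlib

open Matrix

/-- Spectral (ℓ²→ℓ² operator) norm of a real matrix. -/
noncomputable def specNorm {α β : Type*} [Fintype α] [Fintype β] [DecidableEq β]
    (B : Matrix α β ℝ) : ℝ :=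
  ‖LinearMap.toContinuousLinearMap (Matrix.toEuclideanLin B)‖

/-- Euclidean (ℓ²) norm of a finitely indexed real vector. -/
noncomputable def l2 {α : Type*} [Fintype α] (v : α → ℝ) : ℝ := Real.sqrt (∑ i, v i ^ 2)

/-- ℓ¹ norm of a finitely indexed real vector. -/
def l1 {α : Type*} [Fintype α] (v : α → ℝ) : ℝ := ∑ i, |v i|

/-- Submatrix of `A` with rows indexed by `J` and columns indexed by `T`. -/
def sub {n : ℕ} (A : Matrix (Fin n) (Fin n) ℝ) (J T : Finset (Fin n)) :
    Matrix J T ℝ := A.submatrix (fun i => (i : Fin n)) (fun j => (j : Fin n))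

/-- Submatrix of `A` with rows indexed by `J` (all columns kept). -/
def rowSub {n : ℕ} (A : Matrix (Fin n) (Fin n) ℝ) (J : Finset (Fin n)) :
    Matrix J (Fin n) ℝ := A.submatrix (fun i => (i : Fin n)) id

/-!
Write `x = x⋆ + h` and `e = e⋆ + f`; feasibility means `A_{Ω•} h = -f`. Pairing the certificate
with `(h, f)` gives `⟨z⁽ˣ⁾, h⟩ + λ ⟨z⁽ᵉ⁾, f⟩ = 0`, so the subgradient inequality for `ℓ¹`, with the
margin `1 - 3/4` off the supports, shows that the objective grows by at least
`(‖h_{Tᶜ}‖₁ + λ ‖f_J‖₁) / 4`. If this gap vanishes, `h` lives on `T` and `A h` vanishes on `J`, so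
`‖h‖ = ‖A h‖ = ‖A_{JᶜT} h_T‖ ≤ ‖A_{JᶜT}‖ ‖h‖`, which forces `h = 0` and then `f = 0`.
-/

section Norms

variable {α β : Type*} [Fintype α]

lemma l2_eq_norm (v : α → ℝ) : l2 v = ‖WithLp.toLp 2 v‖ := by
  simp [l2, EuclideanSpace.norm_eq]

lemma l2_eq_sqrt_dotProduct (v : α → ℝ) : l2 v = √(v ⬝ᵥ v) := by
  simp [l2, dotProduct, sq]

lemma l2_nonneg (v : α → ℝ) : 0 ≤ l2 v := Real.sqrt_nonneg _

lemma eq_zero_of_l2_eq_zero {v : α → ℝ} (hv : l2 v = 0) : v = 0 := by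
  rwa [l2_eq_norm, norm_eq_zero, WithLp.toLp_eq_zero] at hv

lemma l2_mulVec_le [Fintype β] [DecidableEq β] (B : Matrix α β ℝ) (v : β → ℝ) :
    l2 (B *ᵥ v) ≤ specNorm B * l2 v := by
  simpa [l2_eq_norm, specNorm] using
    (LinearMap.toContinuousLinearMap (Matrix.toEuclideanLin B)).le_opNorm (WithLp.toLp 2 v)

lemma l2_mulVec_of_transpose_mul_self [DecidableEq β] [Fintype β] {A : Matrix α β ℝ}
    (hA : Aᵀ * A = 1) (v : β → ℝ) : l2 (A *ᵥ v) = l2 v := by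
  rw [l2_eq_sqrt_dotProduct, l2_eq_sqrt_dotProduct, dotProduct_mulVec, ← mulVec_transpose,
    mulVec_mulVec, hA, one_mulVec]

lemma l2_restrict_of_support_subset {s : Finset α} {v : α → ℝ} (hv : ∀ i ∉ s, v i = 0) :
    l2 (fun i : s => v i) = l2 v := by
  rw [l2, l2, Finset.sum_coe_sort s (fun i => v i ^ 2)]
  congr 1
  exact Finset.sum_subset (Finset.subset_univ s) fun i _ hi => by simp [hv i hi]

end Norms

lemma sum_abs_eq_zero_iff {α : Type*} {s : Finset α} {w : α → ℝ} :
    ∑ i ∈ s, |w i| = 0 ↔ ∀ i ∈ s, w i = 0 := by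
  simpa using Finset.sum_eq_zero_iff_of_nonneg fun i (_ : i ∈ s) => abs_nonneg (w i)

lemma abs_add_sign_mul_le_abs_add (a b : ℝ) : |a| + Real.sign a * b ≤ |a + b| := by
  rcases lt_trichotomy a 0 with ha | rfl | ha
  · rw [Real.sign_of_neg ha, abs_of_neg ha]
    linarith [neg_le_abs (a + b)]
  · simp
  · rw [Real.sign_of_pos ha, abs_of_pos ha]
    linarith [le_abs_self (a + b)]

lemma mul_add_sub_mul_abs_le_abs {z c : ℝ} (b : ℝ) (hz : |z| ≤ c) :
    z * b + (1 - c) * |b| ≤ |b| := by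
  nlinarith [le_abs_self (z * b), abs_mul z b, mul_le_mul_of_nonneg_right hz (abs_nonneg b)]

lemma l1_add_dotProduct_le_l1_add {α : Type*} [Fintype α] (p : α → Prop) [DecidablePred p]
    {c : ℝ} {v z : α → ℝ} (hv : ∀ i, ¬ p i → v i = 0) (hz : ∀ i, p i → z i = Real.sign (v i))
    (hzc : ∀ i, ¬ p i → |z i| ≤ c) (w : α → ℝ) :
    l1 v + z ⬝ᵥ w + (1 - c) * ∑ i with ¬ p i, |w i| ≤ l1 (v + w) := by
  have hle : ∀ i, |v i| + z i * w i + (if ¬ p i then (1 - c) * |w i| else 0) ≤ |v i + w i| := by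
    intro i
    by_cases hi : p i
    · simpa [hi, hz i hi] using abs_add_sign_mul_le_abs_add (v i) (w i)
    · simpa [hi, hv i hi] using mul_add_sub_mul_abs_le_abs (w i) (hzc i hi)
  rw [Finset.mul_sum, Finset.sum_filter, l1, l1, dotProduct, ← Finset.sum_add_distrib,
    ← Finset.sum_add_distrib]
  exact Finset.sum_le_sum fun i _ => hle i

section Submatrices

variable {n : ℕ} (A : Matrix (Fin n) (Fin n) ℝ)

lemma rowSub_mulVec_apply (Ω : Finset (Fin n)) (v : Fin n → ℝ) (i : Ω) :
    (rowSub A Ω *ᵥ v) i = (A *ᵥ v) i := rfl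

lemma sub_mulVec_restrict {J T : Finset (Fin n)} {v : Fin n → ℝ} (hv : ∀ i ∉ T, v i = 0) :
    sub A J T *ᵥ (fun j : T => v j) = fun i : J => (A *ᵥ v) i := by
  ext i
  simp only [_root_.sub, mulVec, dotProduct, submatrix_apply]
  rw [Finset.sum_coe_sort T (fun j => A i j * v j)]
  exact Finset.sum_subset (Finset.subset_univ T) fun j _ hj => by simp [hv j hj]

lemma eq_zero_of_specNorm_sub_compl_lt_one {A} (hA : Aᵀ * A = 1) {J T : Finset (Fin n)}
    (hnorm : specNorm (sub A Jᶜ T) < 1) {v : Fin n → ℝ} (hT : ∀ i ∉ T, v i = 0)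
    (hJ : ∀ i ∈ J, (A *ᵥ v) i = 0) : v = 0 := by
  have hle : l2 v ≤ specNorm (sub A Jᶜ T) * l2 v := calc
    l2 v = l2 (fun i : (Jᶜ : Finset (Fin n)) => (A *ᵥ v) i) := by
      rw [l2_restrict_of_support_subset fun i hi => hJ i (by simpa using hi),
        l2_mulVec_of_transpose_mul_self hA]
    _ = l2 (sub A Jᶜ T *ᵥ fun j : T => v j) := by rw [sub_mulVec_restrict A hT]
    _ ≤ specNorm (sub A Jᶜ T) * l2 (fun j : T => v j) := l2_mulVec_le _ _
    _ = specNorm (sub A Jᶜ T) * l2 v := by rw [l2_restrict_of_support_subset hT]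
  exact eq_zero_of_l2_eq_zero (by nlinarith [l2_nonneg v])

lemma eq_zero_of_rowSub_mulVec_eq_neg {A} (hA : Aᵀ * A = 1) {Ω S T : Finset (Fin n)}
    (hnorm : specNorm (sub A (Ω \ S)ᶜ T) < 1) {v : Fin n → ℝ} {f : Ω → ℝ}
    (hvf : rowSub A Ω *ᵥ v = -f) (hT : ∀ i ∉ T, v i = 0)
    (hS : ∀ i : Ω, (i : Fin n) ∉ S → f i = 0) :
    v = 0 ∧ f = 0 := by
  have hv : v = 0 := eq_zero_of_specNorm_sub_compl_lt_one hA hnorm hT fun i hi => by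
    obtain ⟨hiΩ, hiS⟩ := Finset.mem_sdiff.1 hi
    rw [← rowSub_mulVec_apply A Ω _ ⟨i, hiΩ⟩, hvf, Pi.neg_apply, hS _ hiS, neg_zero]
  rw [hv, mulVec_zero, zero_eq_neg] at hvf
  exact ⟨hv, hvf⟩

end Submatrices

theorem stmt4_general {n : ℕ} (A : Matrix (Fin n) (Fin n) ℝ) (hA : Aᵀ * A = 1)
    (Ω S T : Finset (Fin n)) (J : Finset (Fin n)) (hJ : J = Ω \ S)
    (xs : Fin n → ℝ) (hxs : ∀ i, i ∉ T → xs i = 0)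
    (es : Ω → ℝ) (hes : ∀ i : Ω, (i : Fin n) ∉ S → es i = 0)
    (lam : ℝ) (hlam : 0 < lam)
    (zx : Fin n → ℝ) (ze : Ω → ℝ)
    (h1 : zx = lam • (rowSub A Ω)ᵀ.mulVec ze)
    (h2T : ∀ i, i ∈ T → zx i = Real.sign (xs i))
    (h2Tc : ∀ i, i ∉ T → |zx i| ≤ 3 / 4)
    (h3S : ∀ i : Ω, (i : Fin n) ∈ S → ze i = Real.sign (es i))
    (h3J : ∀ i : Ω, (i : Fin n) ∈ J → |ze i| ≤ 3 / 4)
    (hnorm : specNorm (sub A Jᶜ T) < 1) :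
    ∀ x : Fin n → ℝ, ∀ e : Ω → ℝ,
      (rowSub A Ω).mulVec x + e = (rowSub A Ω).mulVec xs + es →
      (l1 xs + lam * l1 es ≤ l1 x + lam * l1 e) ∧
      (¬(x = xs ∧ e = es) → l1 xs + lam * l1 es < l1 x + lam * l1 e) := by
  classical
  intro x e hc
  have hMf : rowSub A Ω *ᵥ (x - xs) = -(e - es) := by
    rw [mulVec_sub]
    linear_combination hc
  have hdual : zx ⬝ᵥ (x - xs) = -(lam * ze ⬝ᵥ (e - es)) := by
    rw [h1, smul_dotProduct, mulVec_transpose, ← dotProduct_mulVec, hMf, dotProduct_neg,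
      smul_eq_mul, mul_neg]
  have hx := l1_add_dotProduct_le_l1_add (· ∈ T) hxs h2T h2Tc (x - xs)
  have he := l1_add_dotProduct_le_l1_add (fun i : Ω => (i : Fin n) ∈ S) hes h3S
    (fun i hi => h3J i (hJ ▸ Finset.mem_sdiff.2 ⟨i.2, hi⟩)) (e - es)
  rw [add_sub_cancel] at hx he
  set P := ∑ i with i ∉ T, |(x - xs) i|
  set Q := ∑ i ∈ Finset.univ.filter (fun i : Ω => (i : Fin n) ∉ S), |(e - es) i|
  have hP : 0 ≤ P := Finset.sum_nonneg fun _ _ => abs_nonneg _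
  have hQ : 0 ≤ lam * Q := mul_nonneg hlam.le (Finset.sum_nonneg fun _ _ => abs_nonneg _)
  have hgap : l1 xs + lam * l1 es + (1 / 4) * (P + lam * Q) ≤ l1 x + lam * l1 e := by
    linarith [mul_le_mul_of_nonneg_left he hlam.le]
  refine ⟨by linarith, fun hne => ?_⟩
  suffices 0 < P + lam * Q by linarith
  by_contra hle
  apply hne
  have hT : ∀ i ∉ T, (x - xs) i = 0 := fun i hi =>
    sum_abs_eq_zero_iff.1 (by linarith : P = 0) i (by simpa using hi)
  have hS : ∀ i : Ω, (i : Fin n) ∉ S → (e - es) i = 0 := fun i hi =>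
    sum_abs_eq_zero_iff.1 (by nlinarith : Q = 0) i (by simpa using hi)
  subst hJ
  obtain ⟨hx0, he0⟩ := eq_zero_of_rowSub_mulVec_eq_neg hA hnorm hMf hT hS
  exact ⟨sub_eq_zero.1 hx0, sub_eq_zero.1 he0⟩

/-- Exact recovery from a dual certificate: `(xs, es)` is the unique minimizer. -/
theorem stmt4 {n : ℕ} (A : Matrix (Fin n) (Fin n) ℝ) (hA : Aᵀ * A = 1)
    (Ω S T : Finset (Fin n)) (hSΩ : S ⊆ Ω) (J : Finset (Fin n)) (hJ : J = Ω \ S)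
    (xs : Fin n → ℝ) (hxs : ∀ i, i ∉ T → xs i = 0)
    (es : Ω → ℝ) (hes : ∀ i : Ω, (i : Fin n) ∉ S → es i = 0)
    (lam : ℝ) (hlam : 0 < lam)
    (zx : Fin n → ℝ) (ze : Ω → ℝ)
    (h1 : zx = lam • (rowSub A Ω)ᵀ.mulVec ze)
    (h2T : ∀ i, i ∈ T → zx i = Real.sign (xs i))
    (h2Tc : ∀ i, i ∉ T → |zx i| ≤ 3 / 4)
    (h3S : ∀ i : Ω, (i : Fin n) ∈ S → ze i = Real.sign (es i))
    (h3J : ∀ i : Ω, (i : Fin n) ∈ J → |ze i| ≤ 3 / 4)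
    (hnorm : specNorm (sub A Jᶜ T) < 1) :
    ∀ x : Fin n → ℝ, ∀ e : Ω → ℝ,
      (rowSub A Ω).mulVec x + e = (rowSub A Ω).mulVec xs + es →
      (l1 xs + lam * l1 es ≤ l1 x + lam * l1 e) ∧
      (¬(x = xs ∧ e = es) → l1 xs + lam * l1 es < l1 x + lam * l1 e) :=
  stmt4_general A hA Ω S T J hJ xs hxs es hes lam hlam zx ze h1 h2T h2Tc h3S h3J hnorm
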